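/- arXiv:2205.08889 — 9 statements merged into one kernel-verified Lean document; each statement's English description precedes it below -/
import Mathlib

section
/- The field of complex numbers, regarded as a two-dimensional algebra over the reals, is not positively multiplicative: there is no basis (1, z) of ℂ over ℝ such that z² = a + b·z with a, b nonnegative reals. -/
/-- The field of complex numbers, regarded as a two-dimensional algebra over ℝ, is not
positively multiplicative: there is no basis `(1, z)` of ℂ over ℝ such that
`z² = a + b·z` with `a, b` nonnegative reals. -/
theorem complex_not_positively_multiplicative :
    ¬ ∃ (z : ℂ) (a b : ℝ), LinearIndependent ℝ ![(1 : ℂ), z] ∧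
      0 ≤ a ∧ 0 ≤ b ∧ z ^ 2 = (a : ℂ) + (b : ℂ) * z := by
  rintro ⟨z, a, b, hli, ha, hb, heq⟩
  have him : (z ^ 2).im = ((a : ℂ) + (b : ℂ) * z).im := by rw [heq]
  have hre : (z ^ 2).re = ((a : ℂ) + (b : ℂ) * z).re := by rw [heq]
  simp [pow_two, Complex.mul_im, Complex.mul_re, Complex.add_im, Complex.add_re] at him hre
  by_cases hz : z.im = 0
  · -- z is real, contradicting linear independence
    rw [LinearIndependent.pair_iff] at hli
    have := hli z.re (-1) (by
      have : (z.re • (1 : ℂ)) = (z.re : ℂ) := by simp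
      rw [this]
      have : (-1 : ℝ) • z = -z := by simp
      rw [this]
      rw [Complex.ext_iff]
      simp [hz])
    simpa using this.2
  · -- z.im ≠ 0
    have h2 : z.re + z.re = b :=
      mul_right_cancel₀ hz (by linarith : (z.re + z.re) * z.im = b * z.im)
    have : z.im * z.im ≤ 0 := by nlinarith [hre, h2]
    nlinarith [mul_self_pos.mpr hz, this]
end

section
/- Let A be a finite-dimensional strongly positively multiplicative ℝ-algebra with basis B = {b_0 = 1, ..., b_{n-1}}. Then there exists a unique algebra morphism f: A → ℝ that is nonnegative on every basis element b_i, and f(b_0) = 1; moreover f(b_i) equals the i-th coordinate of the left Perron-Frobenius eigenvector (normalized so its first coordinate is 1) of the positive matrix S = Σ_i L_i where L_i is the left-multiplication matrix of b_i. -/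
/-!
With `s = ∑ i, b i`, the structure constants give `φ (s * b j) = ∑ k, φ (b k) * S k j` for every
linear functional `φ`. So for a character `f` that is nonnegative on the basis, `(f (b i))_i` is a
nonnegative left eigenvector of the positive matrix `S`, and by Perron–Frobenius it is the
positive one normalized by `f 1 = 1`; this gives uniqueness. Conversely, let `φ` be the
functional with `φ (b i) = v i` for the normalized Perron vector `v`, so that `φ (s * x) = μ * φ x`.
By associativity each `x ↦ φ (x * b j)` is again a nonnegative left eigenvector, hence equals
`φ (b j) • φ`: thus `φ` is multiplicative.

The Perron vector is obtained by maximizing `μ` over the compact set of pairs `(w, μ)` with `w`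
in the standard simplex and `μ • w ≤ w ᵥ* S`: if `μ • w ≠ w ᵥ* S`, positivity of `S` makes the
inequality strict for `w ᵥ* S`, which allows a larger `μ`.
-/

open Finset Matrix

theorem ne_zero_of_mem_stdSimplex {𝕜 : Type*} [Semiring 𝕜] [PartialOrder 𝕜] [Nontrivial 𝕜]
    {ι : Type*} [Fintype ι] {x : ι → 𝕜} (hx : x ∈ stdSimplex 𝕜 ι) : x ≠ 0 := by
  rintro rfl
  simp [stdSimplex] at hx

namespace Matrix

variable {ι : Type*} [Fintype ι] {S : Matrix ι ι ℝ} {v w : ι → ℝ} {μ ν : ℝ}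

theorem vecMul_apply_pos (hS : ∀ i j, 0 < S i j) (hw : 0 ≤ w) (hw₀ : w ≠ 0) (j : ι) :
    0 < (w ᵥ* S) j := by
  obtain ⟨i, hi⟩ := Function.ne_iff.mp hw₀
  exact Finset.sum_pos' (fun k _ => mul_nonneg (hw k) (hS k j).le)
    ⟨i, mem_univ i, mul_pos ((hw i).lt_of_ne' hi) (hS i j)⟩

theorem pos_of_vecMul_eq_smul (hS : ∀ i j, 0 < S i j) (hw : 0 ≤ w) (hw₀ : w ≠ 0)
    (hwS : w ᵥ* S = μ • w) (j : ι) : 0 < w j := by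
  have h : 0 < μ * w j := by simpa [hwS] using vecMul_apply_pos hS hw hw₀ j
  exact (hw j).lt_of_ne' (right_ne_zero_of_mul h.ne')

theorem exists_smul_le_eq [Nonempty ι] (hv : ∀ i, 0 < v i) (w : ι → ℝ) :
    ∃ t j₀, t • v ≤ w ∧ w j₀ = t * v j₀ := by
  obtain ⟨j₀, -, hj₀⟩ := exists_min_image univ (fun j => w j / v j) univ_nonempty
  refine ⟨w j₀ / v j₀, j₀, fun i => ?_, (div_mul_cancel₀ _ (hv j₀).ne').symm⟩
  simpa [le_div_iff₀ (hv i)] using hj₀ i (mem_univ i)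

theorem le_of_vecMul_eq_smul [Nonempty ι] (hS : ∀ i j, 0 ≤ S i j) (hv : ∀ i, 0 < v i)
    (hw : ∀ i, 0 < w i) (hvS : v ᵥ* S = μ • v) (hwS : w ᵥ* S = ν • w) : μ ≤ ν := by
  obtain ⟨t, j₀, hle, hj₀⟩ := exists_smul_le_eq hv w
  have key : μ * w j₀ ≤ ν * w j₀ := by
    calc μ * w j₀ = ((t • v) ᵥ* S) j₀ := by simp [smul_vecMul, hvS, hj₀]; ring
      _ ≤ (w ᵥ* S) j₀ := dotProduct_le_dotProduct_of_nonneg_right hle fun k => hS k j₀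
      _ = ν * w j₀ := by simp [hwS]
  exact le_of_mul_le_mul_right key (hw j₀)

theorem eq_smul_of_vecMul_eq_smul [Nonempty ι] (hS : ∀ i j, 0 < S i j) (hv : ∀ i, 0 < v i)
    (hvS : v ᵥ* S = μ • v) (hw : 0 ≤ w) (hwS : w ᵥ* S = ν • w) : ∃ t : ℝ, w = t • v := by
  rcases eq_or_ne w 0 with rfl | hw₀
  · exact ⟨0, (zero_smul ℝ v).symm⟩
  have hw' := pos_of_vecMul_eq_smul hS hw hw₀ hwS
  have hνμ : ν = μ := le_antisymm (le_of_vecMul_eq_smul (fun i j => (hS i j).le) hw' hv hwS hvS)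
    (le_of_vecMul_eq_smul (fun i j => (hS i j).le) hv hw' hvS hwS)
  obtain ⟨t, j₀, hle, hj₀⟩ := exists_smul_le_eq hv w
  refine ⟨t, ?_⟩
  by_contra hne
  have hdS : (w - t • v) ᵥ* S = μ • (w - t • v) := by
    rw [sub_vecMul, smul_vecMul, hvS, hwS, hνμ, smul_sub, smul_comm]
  have := pos_of_vecMul_eq_smul hS (sub_nonneg.mpr hle) (sub_ne_zero.mpr hne) hdS j₀
  simp [hj₀] at this

theorem le_sum_sum_of_smul_le_vecMul (hS : ∀ i j, 0 ≤ S i j) (hw : w ∈ stdSimplex ℝ ι)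
    (h : μ • w ≤ w ᵥ* S) : μ ≤ ∑ i, ∑ j, S i j :=
  calc μ = ∑ j, μ * w j := by rw [← mul_sum, hw.2, mul_one]
    _ ≤ ∑ j, (w ᵥ* S) j := sum_le_sum fun j _ => h j
    _ = ∑ i, w i * ∑ j, S i j := by simp only [vecMul, dotProduct, mul_sum]; exact sum_comm
    _ ≤ ∑ i, ∑ j, S i j := sum_le_sum fun i _ =>
      mul_le_of_le_one_left (sum_nonneg fun j _ => hS i j) (mem_Icc_of_mem_stdSimplex hw i).2

theorem exists_gt_smul_le_vecMul [Nonempty ι] (hS : ∀ i j, 0 < S i j) (hw : w ∈ stdSimplex ℝ ι)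
    (hle : μ • w ≤ w ᵥ* S) (hne : μ • w ≠ w ᵥ* S) :
    ∃ w' ∈ stdSimplex ℝ ι, ∃ μ' > μ, μ' • w' ≤ w' ᵥ* S := by
  set y := w ᵥ* S
  have hy : ∀ j, 0 < y j := vecMul_apply_pos hS hw.1 (ne_zero_of_mem_stdSimplex hw)
  -- `S` is positive, so applying it to the nonzero `y - μ • w ≥ 0` makes every coordinate positive
  have hlt : ∀ j, μ * y j < (y ᵥ* S) j := fun j => by
    have := vecMul_apply_pos hS (sub_nonneg.mpr hle) (sub_ne_zero.mpr hne.symm) j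
    rwa [sub_vecMul, smul_vecMul, Pi.sub_apply, Pi.smul_apply, smul_eq_mul, sub_pos] at this
  set μ' := univ.inf' univ_nonempty fun j => (y ᵥ* S) j / y j
  have hμ' : μ < μ' := (lt_inf'_iff _).mpr fun j _ => (lt_div_iff₀ (hy j)).mpr (hlt j)
  have hμ'y : μ' • y ≤ y ᵥ* S := fun j => (le_div_iff₀ (hy j)).mp (inf'_le _ (mem_univ j))
  have hsum : 0 < ∑ j, y j := sum_pos (fun j _ => hy j) univ_nonempty
  refine ⟨(∑ j, y j)⁻¹ • y, ⟨fun j => mul_nonneg (inv_nonneg.mpr hsum.le) (hy j).le, ?_⟩,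
    μ', hμ', ?_⟩
  · simp [← mul_sum, inv_mul_cancel₀ hsum.ne']
  · rw [smul_vecMul, smul_comm]
    exact smul_le_smul_of_nonneg_left hμ'y (inv_nonneg.mpr hsum.le)

theorem exists_pos_vecMul_eq_smul [Nonempty ι] (hS : ∀ i j, 0 < S i j) :
    ∃ (v : ι → ℝ) (μ : ℝ), (∀ i, 0 < v i) ∧ v ᵥ* S = μ • v := by
  classical
  set C := ∑ i, ∑ j, S i j
  set P : Set ((ι → ℝ) × ℝ) := (stdSimplex ℝ ι ×ˢ Set.Icc 0 C) ∩ {p | p.2 • p.1 ≤ p.1 ᵥ* S}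
  have hP : IsCompact P := ((isCompact_stdSimplex ℝ ι).prod isCompact_Icc).inter_right <|
    isClosed_le (continuous_snd.smul continuous_fst) (continuous_fst.matrix_vecMul continuous_const)
  have hPne : P.Nonempty := by
    obtain ⟨i⟩ := ‹Nonempty ι›
    refine ⟨(Pi.single i 1, 0), ⟨⟨single_mem_stdSimplex ℝ i, le_rfl, ?_⟩, ?_⟩⟩
    · exact sum_nonneg fun i _ => sum_nonneg fun j _ => (hS i j).le
    · exact fun j => by simpa using (hS i j).le
  obtain ⟨⟨w, μ⟩, ⟨⟨hw, hμ⟩, hle⟩, hmax⟩ := hP.exists_isMaxOn hPne continuous_snd.continuousOn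
  have heq : μ • w = w ᵥ* S := by
    by_contra hne
    obtain ⟨w', hw', μ', hμ', hle'⟩ := exists_gt_smul_le_vecMul hS hw hle hne
    have : μ' ≤ μ := hmax (a := (w', μ')) ⟨⟨hw', hμ.1.trans hμ'.le,
      le_sum_sum_of_smul_le_vecMul (fun i j => (hS i j).le) hw' hle'⟩, hle'⟩
    exact this.not_gt hμ'
  exact ⟨w, μ, pos_of_vecMul_eq_smul hS hw.1 (ne_zero_of_mem_stdSimplex hw) heq.symm, heq.symm⟩

theorem exists_pos_vecMul_eq_smul_of_apply_eq_one (hS : ∀ i j, 0 < S i j) (i₀ : ι) :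
    ∃ (v : ι → ℝ) (μ : ℝ), (∀ i, 0 < v i) ∧ v i₀ = 1 ∧ v ᵥ* S = μ • v := by
  have : Nonempty ι := ⟨i₀⟩
  obtain ⟨v, μ, hv, hvS⟩ := exists_pos_vecMul_eq_smul hS
  refine ⟨(v i₀)⁻¹ • v, μ, fun i => mul_pos (inv_pos.mpr (hv i₀)) (hv i), ?_, ?_⟩
  · simp [inv_mul_cancel₀ (hv i₀).ne']
  · rw [smul_vecMul, hvS, smul_comm]

end Matrix

theorem Module.Basis.map_mul_of_apply_mul {R ι A B : Type*} [CommSemiring R] [Semiring A]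
    [Algebra R A] [Semiring B] [Algebra R B] (b : Module.Basis ι R A) (φ : A →ₗ[R] B)
    (h : ∀ i j, φ (b i * b j) = φ (b i) * φ (b j)) (x y : A) : φ (x * y) = φ x * φ y := by
  have : (LinearMap.mul R A).compr₂ φ = (LinearMap.mul R B).compl₁₂ φ φ :=
    LinearMap.ext_basis b b fun i j => by simpa using h i j
  simpa using LinearMap.congr_fun₂ this x y

section StructureConstants

variable {ι A : Type*} [Fintype ι] [Ring A] [Algebra ℝ A] {b : Module.Basis ι ℝ A}
  {c : ι → ι → ι → ℝ}

/-- `S = ∑ i, L i`, where `L i = (c i j k)_{k,j}` is the matrix of left multiplication by `b i`. -/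
def leftMulSum (c : ι → ι → ι → ℝ) : Matrix ι ι ℝ := .of fun k j => ∑ i, c i j k

theorem leftMulSum_pos (hc : ∀ i j k, 0 ≤ c i j k) (hspm : ∀ j k, ∃ i, c i j k ≠ 0) (k j : ι) :
    0 < leftMulSum c k j := by
  obtain ⟨i, hi⟩ := hspm j k
  exact sum_pos' (fun i _ => hc i j k) ⟨i, mem_univ i, (hc i j k).lt_of_ne' hi⟩

theorem vecMul_leftMulSum (hmul : ∀ i j, b i * b j = ∑ k, c i j k • b k) (φ : A →ₗ[ℝ] ℝ) :
    (fun i => φ (b i)) ᵥ* leftMulSum c = fun j => φ ((∑ i, b i) * b j) := by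
  ext j
  simp only [vecMul, dotProduct, leftMulSum, Matrix.of_apply, sum_mul, hmul, map_sum, map_smul,
    smul_eq_mul, mul_sum]
  rw [sum_comm]
  exact sum_congr rfl fun i _ => sum_congr rfl fun k _ => mul_comm _ _

theorem vecMul_leftMulSum_algHom (hmul : ∀ i j, b i * b j = ∑ k, c i j k • b k) (f : A →ₐ[ℝ] ℝ) :
    (fun i => f (b i)) ᵥ* leftMulSum c = f (∑ i, b i) • fun i => f (b i) := by
  ext j
  simpa using congrFun (vecMul_leftMulSum hmul f.toLinearMap) j

theorem AlgHom.apply_basis_eq_of_vecMul_eq_smul {i₀ : ι} (hb : b i₀ = 1)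
    (hmul : ∀ i j, b i * b j = ∑ k, c i j k • b k) (hS : ∀ k j, 0 < leftMulSum c k j)
    {f : A →ₐ[ℝ] ℝ} (hf : ∀ i, 0 ≤ f (b i)) {v : ι → ℝ} {μ : ℝ} (hv : ∀ i, 0 < v i)
    (hv₀ : v i₀ = 1) (hvS : v ᵥ* leftMulSum c = μ • v) (i : ι) : f (b i) = v i := by
  have : Nonempty ι := ⟨i₀⟩
  obtain ⟨t, ht⟩ := eq_smul_of_vecMul_eq_smul hS hv hvS hf (vecMul_leftMulSum_algHom hmul f)
  have ht₁ : t = 1 := by simpa [hb, hv₀] using (congrFun ht i₀).symm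
  simpa [ht₁] using congrFun ht i

theorem exists_algHom_apply_basis_eq {i₀ : ι} (hb : b i₀ = 1)
    (hmul : ∀ i j, b i * b j = ∑ k, c i j k • b k) (hc : ∀ i j k, 0 ≤ c i j k)
    (hS : ∀ k j, 0 < leftMulSum c k j) {v : ι → ℝ} {μ : ℝ} (hv : ∀ i, 0 < v i)
    (hv₀ : v i₀ = 1) (hvS : v ᵥ* leftMulSum c = μ • v) :
    ∃ f : A →ₐ[ℝ] ℝ, ∀ i, f (b i) = v i := by
  have : Nonempty ι := ⟨i₀⟩
  set φ := b.constr ℝ v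
  have hφb : ∀ i, φ (b i) = v i := b.constr_basis ℝ v
  have hφs : ∀ x, φ ((∑ i, b i) * x) = μ * φ x := by
    suffices φ ∘ₗ LinearMap.mulLeft ℝ (∑ i, b i) = μ • φ from fun x => LinearMap.congr_fun this x
    refine b.ext fun j => ?_
    simpa [funext hφb, hvS, hφb] using (congrFun (vecMul_leftMulSum hmul φ) j).symm
  have hφmul : ∀ i j, φ (b i * b j) = φ (b i) * φ (b j) := by
    intro i j
    set ψ := φ ∘ₗ LinearMap.mulRight ℝ (b j)
    have hψS : (fun i => ψ (b i)) ᵥ* leftMulSum c = μ • fun i => ψ (b i) := by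
      rw [vecMul_leftMulSum hmul ψ]
      ext l
      simp [ψ, mul_assoc, hφs]
    have hψ : 0 ≤ fun i => ψ (b i) := fun i => by
      simpa [ψ, hmul, hφb] using sum_nonneg fun k _ => mul_nonneg (hc i j k) (hv k).le
    obtain ⟨t, ht⟩ := eq_smul_of_vecMul_eq_smul hS hv hvS hψ hψS
    have ht₀ : t = φ (b j) := by simpa [ψ, hb, hφb, hv₀] using (congrFun ht i₀).symm
    simpa [ψ, ht₀, mul_comm, hφb] using congrFun ht i
  refine ⟨AlgHom.ofLinearMap φ ?_ (b.map_mul_of_apply_mul φ hφmul), hφb⟩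
  rw [← hb, hφb, hv₀]

end StructureConstants

/-- A finite-dimensional strongly positively multiplicative ℝ-algebra with basis
`b 0 = 1, ..., b (n-1)` admits a unique algebra morphism `f : A → ℝ` nonnegative on all
basis elements; moreover `f (b 0) = 1` and `(f (b i))_i` is the left Perron-Frobenius
eigenvector of `S = (∑ i, c i j k)_{k,j}` normalized so that its first coordinate is `1`. -/
theorem spm_unique_positive_morphism
    (n : ℕ) [NeZero n] {A : Type*} [Ring A] [Algebra ℝ A]
    (b : Module.Basis (Fin n) ℝ A) (h1 : b 0 = 1)
    (c : Fin n → Fin n → Fin n → ℝ)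
    (hmul : ∀ i j, b i * b j = ∑ k, c i j k • b k)
    (hpos : ∀ i j k, 0 ≤ c i j k)
    (hspm : ∀ j k, ∃ i, c i j k ≠ 0) :
    (∃! f : A →ₐ[ℝ] ℝ, ∀ i, 0 ≤ f (b i)) ∧
    ∀ f : A →ₐ[ℝ] ℝ, (∀ i, 0 ≤ f (b i)) →
      f (b 0) = 1 ∧
      ∀ (v : Fin n → ℝ) (μ : ℝ), (∀ i, 0 < v i) → v 0 = 1 →
        (∀ j, ∑ k, v k * (∑ i, c i j k) = μ * v j) →
        ∀ i, f (b i) = v i := by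
  have hS := leftMulSum_pos hpos hspm
  have hchar : ∀ f : A →ₐ[ℝ] ℝ, (∀ i, 0 ≤ f (b i)) → ∀ (v : Fin n → ℝ) (μ : ℝ),
      (∀ i, 0 < v i) → v 0 = 1 → (∀ j, ∑ k, v k * (∑ i, c i j k) = μ * v j) →
      ∀ i, f (b i) = v i := fun f hf v μ hv hv₀ hvS =>
    AlgHom.apply_basis_eq_of_vecMul_eq_smul h1 hmul hS hf hv hv₀ (funext hvS)
  obtain ⟨v, μ, hv, hv₀, hvS⟩ := exists_pos_vecMul_eq_smul_of_apply_eq_one hS 0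
  obtain ⟨f, hf⟩ := exists_algHom_apply_basis_eq h1 hmul hpos hS hv hv₀ hvS
  refine ⟨⟨f, fun i => hf i ▸ (hv i).le, fun g hg => ?_⟩,
    fun g hg => ⟨by rw [h1, map_one], hchar g hg⟩⟩
  exact AlgHom.toLinearMap_injective <| b.ext fun i =>
    (hchar g hg v μ hv hv₀ (congrFun hvS) i).trans (hf i).symm
end

section
/- Let A be a commutative algebra with positively multiplicative basis B and ω a finite-order linear automorphism permuting B up to positive scalars. If ω is an algebra automorphism, then the fixed subalgebra S(A) = ker(ω - id) is a subalgebra of A and the orbit-sums s_l form a basis of S(A) with nonnegative structure constants. -/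
/-!
Since `ω` maps each line `ℝ • b i` onto `ℝ • b (σ i)` with a positive factor, `ω ^ a (b i)` is a
positive multiple of `b (σ ^ a i)`. Hence the orbit sum `s i` has nonnegative coordinates, is
supported on the `σ`-orbit of `i` and has a positive `i`-th coordinate, which makes the orbit sums
of the representatives linearly independent; moreover `s j` is a positive multiple of `s r` when
`r` represents the orbit of `j`. Averaging over the cyclic group generated by `ω`, a fixed vector
`x` satisfies `m • x = ∑ i, x_i • s i`, so it lies in the span of the `s r`, and in the cone they
generate when its coordinates are nonnegative. A product of two orbit sums is fixed and, the
structure constants being nonnegative, has nonnegative coordinates.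
-/

open Finset

namespace Module.End

section FiniteOrder

variable {R M : Type*}

def orbitSum [Semiring R] [AddCommMonoid M] [Module R M] (f : Module.End R M) (m : ℕ) (x : M) :
    M :=
  ∑ a ∈ range m, (f ^ a) x

variable [Ring R] [AddCommGroup M] [Module R M] {f : Module.End R M} {m : ℕ}

theorem apply_orbitSum (hf : f ^ m = 1) (x : M) : f (f.orbitSum m x) = f.orbitSum m x := by
  have h := congr($(mul_geom_sum f m) x)
  rw [hf, sub_self] at h
  simpa [orbitSum, sub_eq_zero, LinearMap.sum_apply] using h

theorem pow_apply_orbitSum (hf : f ^ m = 1) (e : ℕ) (x : M) :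
    (f ^ e) (f.orbitSum m x) = f.orbitSum m x := by
  rw [pow_apply]
  exact Function.iterate_fixed (apply_orbitSum hf x) e

theorem orbitSum_of_apply_eq {x : M} (hx : f x = x) : f.orbitSum m x = m • x := by
  simp [orbitSum, pow_apply, Function.iterate_fixed hx]

theorem nsmul_eq_sum_repr_smul_orbitSum {ι : Type*} [Fintype ι] (b : Basis ι R M) {x : M}
    (hx : f x = x) : m • x = ∑ i, b.repr x i • f.orbitSum m (b i) := by
  conv_lhs => rw [← orbitSum_of_apply_eq hx, ← b.sum_repr x]
  simp only [orbitSum, map_sum, map_smul, smul_sum]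
  exact sum_comm

end FiniteOrder

section Monomial

variable {𝕜 M ι : Type*} [CommRing 𝕜] [AddCommGroup M] [Module 𝕜 M] {b : Basis ι 𝕜 M}
  {f : Module.End 𝕜 M} {σ : Equiv.Perm ι} {lam : ι → 𝕜} {m : ℕ}

theorem pow_apply_basis (hf : ∀ i, f (b i) = lam i • b (σ i)) (a : ℕ) (i : ι) :
    (f ^ a) (b i) = (∏ t ∈ range a, lam ((σ ^ t) i)) • b ((σ ^ a) i) := by
  induction a with
  | zero => simp
  | succ a ih =>
    rw [pow_succ', mul_apply, ih, map_smul, hf, smul_smul, prod_range_succ, pow_succ',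
      Equiv.Perm.mul_apply]

theorem repr_orbitSum_basis [DecidableEq ι] (hf : ∀ i, f (b i) = lam i • b (σ i)) (i j : ι) :
    b.repr (f.orbitSum m (b i)) j =
      ∑ a ∈ range m, if (σ ^ a) i = j then ∏ t ∈ range a, lam ((σ ^ t) i) else 0 := by
  simp [orbitSum, pow_apply_basis hf, Finsupp.single_apply]

theorem repr_orbitSum_basis_eq_zero (hf : ∀ i, f (b i) = lam i • b (σ i)) {i j : ι}
    (hij : ¬ σ.SameCycle i j) : b.repr (f.orbitSum m (b i)) j = 0 := by
  classical
  rw [repr_orbitSum_basis hf]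
  exact sum_eq_zero fun a _ => if_neg fun h => hij ⟨a, by simpa using h⟩

theorem prod_smul_orbitSum_basis_pow_apply (hf : ∀ i, f (b i) = lam i • b (σ i))
    (hord : f ^ m = 1) (e : ℕ) (i : ι) :
    (∏ t ∈ range e, lam ((σ ^ t) i)) • f.orbitSum m (b ((σ ^ e) i)) = f.orbitSum m (b i) := by
  conv_rhs => rw [← pow_apply_orbitSum hord e]
  simp only [orbitSum, map_sum, smul_sum]
  refine sum_congr rfl fun a _ => ?_
  rw [← mul_apply, ← pow_add, add_comm, pow_add, mul_apply, pow_apply_basis hf e i, map_smul]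

section Ordered

variable [LinearOrder 𝕜] [IsStrictOrderedRing 𝕜]

theorem repr_orbitSum_basis_nonneg (hf : ∀ i, f (b i) = lam i • b (σ i))
    (hlam : ∀ i, 0 ≤ lam i) (i j : ι) : 0 ≤ b.repr (f.orbitSum m (b i)) j := by
  classical
  rw [repr_orbitSum_basis hf]
  exact sum_nonneg fun a _ => by split_ifs <;> simp [prod_nonneg fun t _ => hlam _]

theorem repr_orbitSum_basis_self_pos (hf : ∀ i, f (b i) = lam i • b (σ i))
    (hlam : ∀ i, 0 ≤ lam i) (hm : 0 < m) (i : ι) : 0 < b.repr (f.orbitSum m (b i)) i := by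
  classical
  rw [repr_orbitSum_basis hf]
  refine sum_pos' (fun a _ => by split_ifs <;> simp [prod_nonneg fun t _ => hlam _])
    ⟨0, mem_range.2 hm, by simp⟩

end Ordered

end Monomial

section Field

variable {𝕜 M ι : Type*} [Field 𝕜] [LinearOrder 𝕜] [IsStrictOrderedRing 𝕜] [AddCommGroup M]
  [Module 𝕜 M] {b : Basis ι 𝕜 M} {f : Module.End 𝕜 M} {σ : Equiv.Perm ι} {lam : ι → 𝕜} {m : ℕ}

theorem linearIndependent_orbitSum_basis (hf : ∀ i, f (b i) = lam i • b (σ i))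
    (hlam : ∀ i, 0 ≤ lam i) (hm : 0 < m) {R : Set ι}
    (hR : ∀ r ∈ R, ∀ r' ∈ R, σ.SameCycle r r' → r = r') :
    LinearIndependent 𝕜 fun r : R => f.orbitSum m (b r) := by
  refine .of_pairwise_dual_eq_zero_one _
    (fun r => (b.repr (f.orbitSum m (b r)) r)⁻¹ • b.coord r) (fun r r' hne => ?_) fun r => ?_
  · have hcycle : ¬ σ.SameCycle r' r := fun h =>
      hne (Subtype.ext (hR r' r'.2 r r.2 h).symm)
    simp [repr_orbitSum_basis_eq_zero hf hcycle]
  · simp [(repr_orbitSum_basis_self_pos hf hlam hm r).ne']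

theorem orbitSum_basis_mem_hull [Finite ι] (hf : ∀ i, f (b i) = lam i • b (σ i))
    (hlam : ∀ i, 0 < lam i) (hord : f ^ m = 1) {R : Set ι} (hR : ∀ i, ∃ r ∈ R, σ.SameCycle r i)
    (i : ι) :
    f.orbitSum m (b i) ∈ PointedCone.hull 𝕜 (Set.range fun r : R => f.orbitSum m (b r)) := by
  obtain ⟨r, hr, hri⟩ := hR i
  obtain ⟨e, -, rfl⟩ := hri.exists_pow_eq'
  rw [← PointedCone.smul_mem_iff _ (prod_pos fun t _ => hlam ((σ ^ t) r)),
    prod_smul_orbitSum_basis_pow_apply hf hord]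
  exact PointedCone.subset_hull ⟨⟨r, hr⟩, rfl⟩

theorem mem_span_orbitSum_basis_of_apply_eq [Fintype ι] (hf : ∀ i, f (b i) = lam i • b (σ i))
    (hlam : ∀ i, 0 < lam i) (hm : 0 < m) (hord : f ^ m = 1) {R : Set ι}
    (hR : ∀ i, ∃ r ∈ R, σ.SameCycle r i) {x : M} (hx : f x = x) :
    x ∈ Submodule.span 𝕜 (Set.range fun r : R => f.orbitSum m (b r)) := by
  rw [← Submodule.smul_mem_iff _ (Nat.cast_ne_zero.2 hm.ne' : (m : 𝕜) ≠ 0),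
    Nat.cast_smul_eq_nsmul, nsmul_eq_sum_repr_smul_orbitSum b hx]
  exact Submodule.sum_mem _ fun i _ => Submodule.smul_mem _ _ <|
    PointedCone.hull_le_span _ _ (orbitSum_basis_mem_hull hf hlam hord hR i)

theorem mem_hull_orbitSum_basis_of_apply_eq [Fintype ι] (hf : ∀ i, f (b i) = lam i • b (σ i))
    (hlam : ∀ i, 0 < lam i) (hm : 0 < m) (hord : f ^ m = 1) {R : Set ι}
    (hR : ∀ i, ∃ r ∈ R, σ.SameCycle r i) {x : M} (hx : f x = x) (hx₀ : ∀ i, 0 ≤ b.repr x i) :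
    x ∈ PointedCone.hull 𝕜 (Set.range fun r : R => f.orbitSum m (b r)) := by
  rw [← PointedCone.smul_mem_iff _ (Nat.cast_pos.2 hm : (0 : 𝕜) < m), Nat.cast_smul_eq_nsmul,
    nsmul_eq_sum_repr_smul_orbitSum b hx]
  exact Submodule.sum_mem _ fun i _ =>
    PointedCone.smul_mem _ (hx₀ i) (orbitSum_basis_mem_hull hf hlam hord hR i)

end Field

end Module.End

theorem Module.Basis.repr_mul_nonneg {𝕜 A ι : Type*} [CommSemiring 𝕜] [PartialOrder 𝕜]
    [IsOrderedRing 𝕜] [Semiring A] [Algebra 𝕜 A] [Fintype ι] (b : Basis ι 𝕜 A)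
    {c : ι → ι → ι → 𝕜} (hmul : ∀ i j, b i * b j = ∑ k, c i j k • b k)
    (hc : ∀ i j k, 0 ≤ c i j k) {x y : A} (hx : ∀ i, 0 ≤ b.repr x i) (hy : ∀ i, 0 ≤ b.repr y i)
    (k : ι) : 0 ≤ b.repr (x * y) k := by
  have hxy : x * y = ∑ l, (∑ i, ∑ j, b.repr x i * b.repr y j * c i j l) • b l := by
    conv_lhs => rw [← b.sum_repr x, ← b.sum_repr y]
    simp only [sum_mul_sum, smul_mul_smul_comm, hmul, smul_sum, sum_smul, smul_smul]
    exact (sum_congr rfl fun i _ => sum_comm).trans sum_comm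
  rw [hxy, b.repr_sum_self]
  exact sum_nonneg fun i _ => sum_nonneg fun j _ =>
    mul_nonneg (mul_nonneg (hx i) (hy j)) (hc i j k)

open Module.End

theorem fixed_subalgebra_positively_multiplicative_general
    (n m : ℕ) (hm : 0 < m) {A : Type*} [CommRing A] [Algebra ℝ A]
    (b : Module.Basis (Fin n) ℝ A)
    (c : Fin n → Fin n → Fin n → ℝ)
    (hmul : ∀ i j, b i * b j = ∑ k, c i j k • b k)
    (hpos : ∀ i j k, 0 ≤ c i j k)
    (ω : A ≃ₐ[ℝ] A) (hord : (ω.toLinearMap) ^ m = 1)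
    (σ : Equiv.Perm (Fin n)) (lam : Fin n → ℝ) (hlam : ∀ i, 0 < lam i)
    (hω : ∀ i, ω (b i) = lam i • b (σ i))
    (R : Finset (Fin n))
    (hR : ∀ i : Fin n, ∃! r, r ∈ R ∧ σ.SameCycle r i) :
    LinearIndependent ℝ
        (fun r : R => ∑ a ∈ Finset.range m, (ω.toLinearMap ^ a) (b ↑r)) ∧
    (∀ x : A, ω x = x ↔
      x ∈ Submodule.span ℝ
        (Set.range fun r : R => ∑ a ∈ Finset.range m, (ω.toLinearMap ^ a) (b ↑r))) ∧
    ∃ d : R → R → R → ℝ, (∀ r r' r'', 0 ≤ d r r' r'') ∧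
      ∀ r r' : R,
        (∑ a ∈ Finset.range m, (ω.toLinearMap ^ a) (b ↑r)) *
          (∑ a ∈ Finset.range m, (ω.toLinearMap ^ a) (b ↑r')) =
        ∑ r'' : R, d r r' r'' • ∑ a ∈ Finset.range m, (ω.toLinearMap ^ a) (b ↑r'') := by
  have hcover : ∀ i, ∃ r ∈ (R : Set (Fin n)), σ.SameCycle r i := fun i => (hR i).exists
  have hsep : ∀ r ∈ (R : Set (Fin n)), ∀ r' ∈ (R : Set (Fin n)), σ.SameCycle r r' → r = r' :=
    fun r hr r' hr' h => (hR r').unique ⟨hr, h⟩ ⟨hr', .refl σ r'⟩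
  have hfix : ∀ x, ω.toLinearMap (orbitSum ω.toLinearMap m x) = orbitSum ω.toLinearMap m x :=
    apply_orbitSum hord
  refine ⟨linearIndependent_orbitSum_basis hω (fun i => (hlam i).le) hm hsep, fun x =>
    ⟨mem_span_orbitSum_basis_of_apply_eq hω hlam hm hord hcover, fun hx => ?_⟩, ?_⟩
  · exact (Submodule.span_le (p := LinearMap.eqLocus ω.toLinearMap LinearMap.id)).2
      (Set.range_subset_iff.2 fun r => hfix _) hx
  · have hprod (r r' : R) : ∃ d : R → ℝ, (∀ r'', 0 ≤ d r'') ∧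
        orbitSum ω.toLinearMap m (b r) * orbitSum ω.toLinearMap m (b r') =
          ∑ r'', d r'' • orbitSum ω.toLinearMap m (b r'') := by
      have hmem := mem_hull_orbitSum_basis_of_apply_eq hω hlam hm hord hcover
        (x := orbitSum ω.toLinearMap m (b r) * orbitSum ω.toLinearMap m (b r'))
        (by show ω (_ * _) = _; rw [map_mul]; exact congr($(hfix _) * $(hfix _)))
        (b.repr_mul_nonneg hmul hpos (repr_orbitSum_basis_nonneg hω (fun i => (hlam i).le) _)
          (repr_orbitSum_basis_nonneg hω (fun i => (hlam i).le) _))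
      obtain ⟨d, hd⟩ := (Submodule.mem_span_range_iff_exists_fun _).1 hmem
      exact ⟨fun r'' => d r'', fun r'' => (d r'').2, hd.symm⟩
    choose d hd₀ hd using hprod
    exact ⟨d, hd₀, hd⟩

/-- Let `A` be a commutative algebra with positively multiplicative basis
`b 0 = 1, ..., b (n-1)` and `ω` an algebra automorphism of finite order `m` with
`ω (b i) = lam i • b (σ i)`, `lam i > 0`. Then the fixed set of `ω` is a subalgebra with
basis the orbit-sums `s r = ∑_{a<m} ω^a (b r)` (`r` running over representatives `R` of
the `σ`-orbits), and the structure constants of this basis are nonnegative. -/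
theorem fixed_subalgebra_positively_multiplicative
    (n m : ℕ) [NeZero n] (hm : 0 < m) {A : Type*} [CommRing A] [Algebra ℝ A]
    (b : Module.Basis (Fin n) ℝ A) (h1 : b 0 = 1)
    (c : Fin n → Fin n → Fin n → ℝ)
    (hmul : ∀ i j, b i * b j = ∑ k, c i j k • b k)
    (hpos : ∀ i j k, 0 ≤ c i j k)
    (ω : A ≃ₐ[ℝ] A) (hord : (ω.toLinearMap) ^ m = 1)
    (σ : Equiv.Perm (Fin n)) (lam : Fin n → ℝ) (hlam : ∀ i, 0 < lam i)
    (hω : ∀ i, ω (b i) = lam i • b (σ i))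
    (R : Finset (Fin n))
    (hR : ∀ i : Fin n, ∃! r, r ∈ R ∧ σ.SameCycle r i) :
    LinearIndependent ℝ
        (fun r : R => ∑ a ∈ Finset.range m, (ω.toLinearMap ^ a) (b ↑r)) ∧
    (∀ x : A, ω x = x ↔
      x ∈ Submodule.span ℝ
        (Set.range fun r : R => ∑ a ∈ Finset.range m, (ω.toLinearMap ^ a) (b ↑r))) ∧
    ∃ d : R → R → R → ℝ, (∀ r r' r'', 0 ≤ d r r' r'') ∧
      ∀ r r' : R,
        (∑ a ∈ Finset.range m, (ω.toLinearMap ^ a) (b ↑r)) *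
          (∑ a ∈ Finset.range m, (ω.toLinearMap ^ a) (b ↑r')) =
        ∑ r'' : R, d r r' r'' • ∑ a ∈ Finset.range m, (ω.toLinearMap ^ a) (b ↑r'') :=
  fixed_subalgebra_positively_multiplicative_general n m hm b c hmul hpos ω hord σ lam hlam hω R hR
end

section
/- Let Γ be a strongly connected finite graph that is multiplicative at some vertex, with structure constants c_{i,j}^k for the associated basis. Then for every pair of indices (j,k) there exists an index i such that c_{i,j}^k ≠ 0. -/
/-- Let `Γ` be a strongly connected finite graph (with adjacency matrix `A`, strong
connectivity meaning that any two vertices are joined by a path, i.e. some power of `A`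
has a nonzero corresponding entry) which is multiplicative at some vertex `i₀`, with
associated basis `b` and structure constants `c`. Then for every pair `(j,k)` there exists
`i` with `c i j k ≠ 0`. -/
theorem strongly_connected_multiplicative_spm
    {K : Type*} [Field K] (n : ℕ) (i₀ : Fin n)
    (A : Matrix (Fin n) (Fin n) K)
    (hconn : ∀ i j, ∃ ℓ : ℕ, (A ^ ℓ) i j ≠ 0)
    (b : Fin n → Matrix (Fin n) (Fin n) K)
    (hli : LinearIndependent K b)
    (h1 : b i₀ = 1)
    (hA : ∀ i, A * b i = ∑ j, A i j • b j)
    (c : Fin n → Fin n → Fin n → K)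
    (hmul : ∀ i j, b i * b j = ∑ k, c i j k • b k) :
    ∀ j k, ∃ i, c i j k ≠ 0 := by
  -- key: A^ℓ * b m = ∑ j, (A^ℓ) m j • b j
  have hpow : ∀ (ℓ : ℕ) (m : Fin n), A ^ ℓ * b m = ∑ j, (A ^ ℓ) m j • b j := by
    intro ℓ
    induction ℓ with
    | zero =>
      intro m
      simp [Matrix.one_apply]
    | succ ℓ ih =>
      intro m
      have : A ^ (ℓ + 1) * b m = A ^ ℓ * (A * b m) := by
        rw [pow_succ, mul_assoc]
      rw [this, hA m, Finset.mul_sum]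
      have h1' : ∀ j, A ^ ℓ * (A m j • b j) = ∑ p, (A m j * (A ^ ℓ) j p) • b p := by
        intro j
        rw [Matrix.mul_smul, ih j, Finset.smul_sum]
        simp [smul_smul]
      simp_rw [h1']
      rw [Finset.sum_comm]
      congr 1
      ext p
      rw [← Finset.sum_smul]
      congr 1
      rw [pow_succ']
      simp [Matrix.mul_apply]
  intro j k
  obtain ⟨ℓ, hℓ⟩ := hconn j k
  by_contra hc
  push_neg at hc
  -- A^ℓ = ∑ i, (A^ℓ) i₀ i • b i
  have hAl : (A ^ ℓ : Matrix (Fin n) (Fin n) K) = ∑ i, (A ^ ℓ) i₀ i • b i := by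
    have := hpow ℓ i₀
    rwa [h1, mul_one] at this
  -- compute A^ℓ * b j two ways
  have e1 : A ^ ℓ * b j = ∑ p, (A ^ ℓ) j p • b p := hpow ℓ j
  have e2 : A ^ ℓ * b j = ∑ p, (∑ i, (A ^ ℓ) i₀ i * c i j p) • b p := by
    conv_lhs => rw [hAl]
    rw [Finset.sum_mul]
    have : ∀ i, ((A ^ ℓ) i₀ i • b i) * b j = ∑ p, ((A ^ ℓ) i₀ i * c i j p) • b p := by
      intro i
      rw [Matrix.smul_mul, hmul i j, Finset.smul_sum]
      simp [smul_smul]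
    simp_rw [this]
    rw [Finset.sum_comm]
    congr 1
    ext p
    rw [← Finset.sum_smul]
  -- linear independence gives equality of coefficients
  have heq : ∀ p, (A ^ ℓ) j p = ∑ i, (A ^ ℓ) i₀ i * c i j p := by
    have hz : ∑ p, ((A ^ ℓ) j p - ∑ i, (A ^ ℓ) i₀ i * c i j p) • b p = 0 := by
      simp_rw [sub_smul, Finset.sum_sub_distrib]
      rw [← e1, ← e2, sub_self]
    have := (Fintype.linearIndependent_iff.mp hli) _ hz
    intro p
    have := this p
    exact sub_eq_zero.mp this
  have := heq k
  simp [hc] at this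
  exact hℓ this
end

section
/- Let A ∈ M_n(K) with dim K[A] = n and suppose e_{i_0} is a cyclic vector for A. Then there is a unique basis B = {b_0,...,b_{n-1}} of K[A] with b_{i_0} = 1 and A·b_j = Σ_i a_{i,j} b_i for all j, and this basis satisfies b_i(e_{i_0}) = e_i for all i. Moreover the structure constants in b_i b_j = Σ_k c_{i,j}^k b_k are precisely the entries of the j-th column of the matrix b_i, and the j-th column of b_i equals the i-th column of b_j. -/
/-! If `e i₀` is cyclic for `A`, a matrix commuting with `A` is determined by its `i₀`-th column,
since that column determines its values on every `A ^ m e i₀`. Writing each `e i` as `M e i₀` with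
`M` a polynomial in `A` gives the basis, and the criterion gives its uniqueness. For any admissible
`b`, the matrix with columns `b j e i₀` commutes with `A` (this is `A * b j = ∑ i, A i j • b i` read
columnwise) and fixes `e i₀`, hence is `1`: so `b i e i₀ = e i`, and both the multiplication table
and the column symmetry `b i k j = (b i * b j) e i₀ k` are read off at `e i₀`. -/

namespace Matrix

variable {R n : Type*} [CommSemiring R] [Fintype n]

theorem commute_of_mul_eq_sum_smul {A : Matrix n n R} {b : n → Matrix n n R}
    (hA : ∀ j, A * b j = ∑ i, A i j • b i) (v : n → R) :
    Commute A (of fun k j => (b j *ᵥ v) k) := by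
  ext k j
  calc (A * of fun k j => (b j *ᵥ v) k) k j = ((A * b j) *ᵥ v) k := by
        rw [← mulVec_mulVec]; simp [mul_apply, mulVec, dotProduct]
    _ = ((of fun k j => (b j *ᵥ v) k) * A) k j := by
        rw [hA, sum_mulVec]; simp [mul_apply, Finset.sum_apply, smul_mulVec, mul_comm]

variable [DecidableEq n]

def IsCyclicVector (A : Matrix n n R) (v : n → R) : Prop :=
  Submodule.span R (Set.range fun m : ℕ => A ^ m *ᵥ v) = ⊤

theorem IsCyclicVector.of_span_fin_eq_top {A : Matrix n n R} {v : n → R} {d : ℕ}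
    (h : Submodule.span R (Set.range fun j : Fin d => A ^ (j : ℕ) *ᵥ v) = ⊤) :
    IsCyclicVector A v :=
  top_le_iff.mp <| h ▸ Submodule.span_mono
    (Set.range_comp_subset_range Fin.val fun m : ℕ => A ^ m *ᵥ v)

theorem sum_smul_mulVec_of_mulVec_eq_single {b : n → Matrix n n R} {v : n → R}
    (hb : ∀ k, b k *ᵥ v = Pi.single k 1) (M : Matrix n n R) (j : n) :
    (∑ k, M k j • b k) *ᵥ v = M *ᵥ Pi.single j 1 := by
  simp only [sum_mulVec, smul_mulVec, hb, mulVec_single_one]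
  ext k
  simp [Finset.sum_apply, Pi.single_apply]

theorem apply_eq_apply_of_commute {b : n → Matrix n n R} {v : n → R}
    (hb : ∀ k, b k *ᵥ v = Pi.single k 1) {i j : n} (h : Commute (b i) (b j)) (k : n) :
    b i k j = b j k i := by
  have hcol : ∀ i j, b i k j = ((b i * b j) *ᵥ v) k := fun i j => by
    rw [← mulVec_mulVec, hb, mulVec_single_one, col_apply]
  rw [hcol, h.eq, ← hcol]

theorem linearIndependent_of_mulVec_eq_single {b : n → Matrix n n R} {v : n → R}
    (hb : ∀ k, b k *ᵥ v = Pi.single k 1) : LinearIndependent R b := by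
  refine LinearIndependent.of_comp (LinearMap.applyₗ v ∘ₗ toLin'.toLinearMap) ?_
  convert Pi.linearIndependent_single_one n R with k
  simp [hb]

namespace IsCyclicVector

variable {A M N : Matrix n n R} {v : n → R}

theorem eq_of_commute_of_mulVec_eq (hv : IsCyclicVector A v) (hM : Commute M A)
    (hN : Commute N A) (h : M *ᵥ v = N *ᵥ v) : M = N := by
  have hpow : ∀ {X : Matrix n n R}, Commute X A → ∀ m : ℕ,
      X *ᵥ (A ^ m *ᵥ v) = A ^ m *ᵥ (X *ᵥ v) := fun hX m => by
    rw [mulVec_mulVec, (hX.pow_right m).eq, mulVec_mulVec]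
  refine toLin'.injective (LinearMap.ext_on_range hv fun m => ?_)
  simp only [toLin'_apply, hpow hM, hpow hN, h]

theorem eq_of_mem_adjoin_of_mulVec_eq (hv : IsCyclicVector A v)
    (hM : M ∈ Algebra.adjoin R {A}) (hN : N ∈ Algebra.adjoin R {A}) (h : M *ᵥ v = N *ᵥ v) :
    M = N :=
  hv.eq_of_commute_of_mulVec_eq (Algebra.commute_of_mem_adjoin_self hM).symm
    (Algebra.commute_of_mem_adjoin_self hN).symm h

theorem exists_mem_adjoin_mulVec_eq (hv : IsCyclicVector A v) (w : n → R) :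
    ∃ M ∈ Algebra.adjoin R {A}, M *ᵥ v = w := by
  have hrange : Submodule.map (LinearMap.applyₗ v ∘ₗ toLin'.toLinearMap)
      (Subalgebra.toSubmodule (Algebra.adjoin R {A})) = ⊤ := by
    refine top_le_iff.mp (hv ▸ Submodule.span_le.mpr ?_)
    rintro _ ⟨m, rfl⟩
    exact ⟨A ^ m, pow_mem (Algebra.self_mem_adjoin_singleton R A) m, rfl⟩
  obtain ⟨M, hM, hMw⟩ := hrange.ge (Submodule.mem_top (x := w))
  exact ⟨M, hM, by simpa using hMw⟩

theorem mul_eq_sum_smul (hv : IsCyclicVector A v) {b : n → Matrix n n R}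
    (hmem : ∀ k, b k ∈ Algebra.adjoin R {A}) (hb : ∀ k, b k *ᵥ v = Pi.single k 1)
    (hM : M ∈ Algebra.adjoin R {A}) (j : n) : M * b j = ∑ k, M k j • b k :=
  hv.eq_of_mem_adjoin_of_mulVec_eq (mul_mem hM (hmem j))
    (sum_mem fun k _ => Subalgebra.smul_mem _ (hmem k) _)
    (by rw [← mulVec_mulVec, hb, sum_smul_mulVec_of_mulVec_eq_single hb])

theorem mulVec_single_eq_single {i₀ : n} (hv : IsCyclicVector A (Pi.single i₀ 1))
    {b : n → Matrix n n R} (h1 : b i₀ = 1) (hA : ∀ j, A * b j = ∑ i, A i j • b i) (i : n) :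
    b i *ᵥ Pi.single i₀ 1 = Pi.single i 1 := by
  have hW : (of fun k j => (b j *ᵥ Pi.single i₀ 1) k) = 1 := by
    refine hv.eq_of_commute_of_mulVec_eq (commute_of_mul_eq_sum_smul hA _).symm
      (Commute.one_left A) ?_
    rw [mulVec_single_one, one_mulVec]
    ext k
    simp [h1, one_apply, Pi.single_apply, eq_comm]
  ext k
  simpa [mulVec_single_one, one_apply, Pi.single_apply, eq_comm] using congrFun (congrFun hW k) i

end IsCyclicVector

end Matrix

theorem cyclic_vector_basis_properties_general
    {K : Type*} [Field K] (n : ℕ) (i₀ : Fin n)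
    (A : Matrix (Fin n) (Fin n) K)
    (hcyc₂ : Submodule.span K
      (Set.range fun j : Fin n => (A ^ (j : ℕ)).mulVec (Pi.single i₀ 1)) = ⊤) :
    (∃! b : Fin n → Matrix (Fin n) (Fin n) K,
      (∀ i, b i ∈ Algebra.adjoin K {A}) ∧ LinearIndependent K b ∧
      b i₀ = 1 ∧ ∀ j, A * b j = ∑ i, A i j • b i) ∧
    ∀ b : Fin n → Matrix (Fin n) (Fin n) K,
      ((∀ i, b i ∈ Algebra.adjoin K {A}) ∧ LinearIndependent K b ∧
        b i₀ = 1 ∧ ∀ j, A * b j = ∑ i, A i j • b i) →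
      (∀ i, (b i).mulVec (Pi.single i₀ 1) = Pi.single i 1) ∧
      (∀ i j, b i * b j = ∑ k, (b i k j) • b k) ∧
      (∀ i j k, b i k j = b j k i) := by
  have hv : Matrix.IsCyclicVector A (Pi.single i₀ 1) := .of_span_fin_eq_top hcyc₂
  choose b₀ hmem₀ hb₀ using fun i => hv.exists_mem_adjoin_mulVec_eq (Pi.single i 1)
  refine ⟨⟨b₀, ⟨hmem₀, Matrix.linearIndependent_of_mulVec_eq_single hb₀, ?_,
    hv.mul_eq_sum_smul hmem₀ hb₀ (Algebra.self_mem_adjoin_singleton K A)⟩, ?_⟩, ?_⟩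
  · exact hv.eq_of_mem_adjoin_of_mulVec_eq (hmem₀ i₀) (one_mem _) (by rw [hb₀, Matrix.one_mulVec])
  · rintro b ⟨hmem, -, h1, hA⟩
    funext i
    exact hv.eq_of_mem_adjoin_of_mulVec_eq (hmem i) (hmem₀ i)
      (by rw [hv.mulVec_single_eq_single h1 hA, hb₀])
  · rintro b ⟨hmem, -, h1, hA⟩
    have hb := hv.mulVec_single_eq_single h1 hA
    refine ⟨hb, fun i j => hv.mul_eq_sum_smul hmem hb (hmem i) j, fun i j k => ?_⟩
    exact Matrix.apply_eq_apply_of_commute hb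
      (Algebra.commute_of_mem_adjoin_singleton_of_commute (hmem j)
        (Algebra.commute_of_mem_adjoin_self (hmem i)).symm) k

/-- Let `A ∈ M_n(K)` with `dim K[A] = n` and suppose `e i₀` is a cyclic vector for `A`.
Then there is a unique basis `b` of `K[A]` with `b i₀ = 1` and `A·b j = ∑ i, A i j • b i`;
it satisfies `b i (e i₀) = e i` for all `i`, the structure constants in
`b i * b j = ∑ k, c i j k • b k` are the entries of the `j`-th column of `b i`
(`c i j k = (b i) k j`), and the `j`-th column of `b i` equals the `i`-th column of `b j`. -/
theorem cyclic_vector_basis_properties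
    {K : Type*} [Field K] (n : ℕ) (i₀ : Fin n)
    (A : Matrix (Fin n) (Fin n) K)
    (hdim : LinearIndependent K fun i : Fin n => A ^ (i : ℕ))
    (hcyc₁ : LinearIndependent K
      fun j : Fin n => (A ^ (j : ℕ)).mulVec (Pi.single i₀ 1))
    (hcyc₂ : Submodule.span K
      (Set.range fun j : Fin n => (A ^ (j : ℕ)).mulVec (Pi.single i₀ 1)) = ⊤) :
    (∃! b : Fin n → Matrix (Fin n) (Fin n) K,
      (∀ i, b i ∈ Algebra.adjoin K {A}) ∧ LinearIndependent K b ∧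
      b i₀ = 1 ∧ ∀ j, A * b j = ∑ i, A i j • b i) ∧
    ∀ b : Fin n → Matrix (Fin n) (Fin n) K,
      ((∀ i, b i ∈ Algebra.adjoin K {A}) ∧ LinearIndependent K b ∧
        b i₀ = 1 ∧ ∀ j, A * b j = ∑ i, A i j • b i) →
      (∀ i, (b i).mulVec (Pi.single i₀ 1) = Pi.single i 1) ∧
      (∀ i j, b i * b j = ∑ k, (b i k j) • b k) ∧
      (∀ i j k, b i k j = b j k i) :=
  cyclic_vector_basis_properties_general n i₀ A hcyc₂
end

section
/- Let T be an invertible bounded operator on ℓ¹(I) (I countable) such that both T and T⁻¹ have nonnegative matrix entries in the standard Schauder basis (e_i). Then T is a generalized permutation: there exist a permutation σ of I and positive reals λ_i such that T e_i = λ_i e_{σ(i)} for all i. -/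
/-!
Write `a i j` and `b i j` for the matrix entries of `T` and `S`. Since `T ∘ S = S ∘ T = id` and
`T (S eⱼ) = ∑ₖ (S eⱼ)ₖ T eₖ` converges in `ℓ¹`, the relations `∑ₖ a i k * b k j = δ i j` and
`∑ₖ b i k * a k j = δ i j` hold. All terms are nonnegative, so off the diagonal every product
`a i k * b k j` vanishes, while on the diagonal some product is nonzero. Hence column `j` of `a`
has exactly one nonzero entry, in row `σ j`, and `σ` is a bijection.
-/

open scoped ENNReal ComplexOrder

theorem exists_perm_iff_of_comp_imp_eq {I : Type*} (P Q : I → I → Prop)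
    (hPQ : ∀ i j k, P i k → Q k j → i = j) (hQP : ∀ i j k, Q i k → P k j → i = j)
    (hP : ∀ i, ∃ k, P i k) (hQP_self : ∀ i, ∃ k, Q i k ∧ P k i) :
    ∃ σ : Equiv.Perm I, ∀ i j, P i j ↔ i = σ j := by
  choose σ hQσ hPσ using hQP_self
  have hP_iff : ∀ i j, P i j ↔ i = σ j :=
    fun i j => ⟨fun hij => hPQ i (σ j) j hij (hQσ j), fun h => h ▸ hPσ j⟩
  have hinj : Function.Injective σ := fun j j' h => hQP j j' (σ j) (hQσ j) (h ▸ hPσ j')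
  have hsurj : Function.Surjective σ := fun i =>
    let ⟨k, hk⟩ := hP i
    ⟨k, ((hP_iff i k).1 hk).symm⟩
  exact ⟨Equiv.ofBijective σ ⟨hinj, hsurj⟩, hP_iff⟩

section NonnegMatrix

variable {I R : Type*} [DecidableEq I] [Semiring R] [TopologicalSpace R]

theorem exists_mul_ne_zero_of_hasSum_mul_eq_ite [Nontrivial R] [T2Space R] {a b : I → I → R}
    (hab : ∀ i j, HasSum (fun k => a i k * b k j) (if i = j then 1 else 0)) (i : I) :
    ∃ k, a i k * b k i ≠ 0 := by
  by_contra! h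
  have hsum := hab i i
  rw [if_pos rfl, funext h] at hsum
  exact one_ne_zero (hsum.unique hasSum_zero)

variable [PartialOrder R] [IsOrderedRing R] [OrderClosedTopology R]

theorem eq_of_mul_ne_zero_of_hasSum_mul_eq_ite {a b : I → I → R}
    (ha : ∀ i j, 0 ≤ a i j) (hb : ∀ i j, 0 ≤ b i j)
    (hab : ∀ i j, HasSum (fun k => a i k * b k j) (if i = j then 1 else 0))
    {i j k : I} (hk : a i k * b k j ≠ 0) : i = j := by
  by_contra hij
  have hsum := hab i j
  rw [if_neg hij, hasSum_zero_iff_of_nonneg fun k => mul_nonneg (ha i k) (hb k j)] at hsum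
  exact hk (congrFun hsum k)

theorem exists_perm_ne_zero_iff_of_hasSum_mul_eq_ite [NoZeroDivisors R] [Nontrivial R]
    [T2Space R] {a b : I → I → R} (ha : ∀ i j, 0 ≤ a i j) (hb : ∀ i j, 0 ≤ b i j)
    (hab : ∀ i j, HasSum (fun k => a i k * b k j) (if i = j then 1 else 0))
    (hba : ∀ i j, HasSum (fun k => b i k * a k j) (if i = j then 1 else 0)) :
    ∃ σ : Equiv.Perm I, ∀ i j, a i j ≠ 0 ↔ i = σ j := by
  refine exists_perm_iff_of_comp_imp_eq (fun i j => a i j ≠ 0) (fun i j => b i j ≠ 0)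
    (fun i j k hik hkj => eq_of_mul_ne_zero_of_hasSum_mul_eq_ite ha hb hab (mul_ne_zero hik hkj))
    (fun i j k hik hkj => eq_of_mul_ne_zero_of_hasSum_mul_eq_ite hb ha hba (mul_ne_zero hik hkj))
    (fun i => ?_) (fun i => ?_)
  · obtain ⟨k, hk⟩ := exists_mul_ne_zero_of_hasSum_mul_eq_ite hab i
    exact ⟨k, left_ne_zero_of_mul hk⟩
  · obtain ⟨k, hk⟩ := exists_mul_ne_zero_of_hasSum_mul_eq_ite hba i
    exact ⟨k, left_ne_zero_of_mul hk, right_ne_zero_of_mul hk⟩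

end NonnegMatrix

namespace lp

variable {I 𝕜 : Type*} [DecidableEq I] [NormedField 𝕜] {p : ℝ≥0∞}

theorem eq_single_of_apply_eq_zero {f : lp (fun _ : I => 𝕜) p} {j : I}
    (hf : ∀ i, i ≠ j → f i = 0) : f = lp.single p j (f j) := by
  ext i
  by_cases hij : i = j
  · rw [hij, lp.single_apply_self]
  · rw [lp.single_apply_ne p j _ hij, hf i hij]

variable [Fact (1 ≤ p)]

theorem hasSum_apply_single_mul (hp : p ≠ ⊤)
    (U : lp (fun _ : I => 𝕜) p →L[𝕜] lp (fun _ : I => 𝕜) p) (v : lp (fun _ : I => 𝕜) p)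
    (i : I) : HasSum (fun k => U (lp.single p k 1) i * v k) (U v i) := by
  have hterm : ∀ k, ((lp.evalCLM 𝕜 (fun _ : I => 𝕜) p i).comp U) (lp.single p k (v k)) =
      U (lp.single p k 1) i * v k := fun k => by
    have hsingle : lp.single (E := fun _ : I => 𝕜) p k (v k) = v k • lp.single p k 1 := by
      rw [← lp.single_smul, smul_eq_mul, mul_one]
    rw [hsingle, map_smul, smul_eq_mul, mul_comm]
    rfl
  have hsum := ((lp.evalCLM 𝕜 (fun _ : I => 𝕜) p i).comp U).hasSum (lp.hasSum_single hp v)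
  rwa [funext hterm] at hsum

theorem hasSum_apply_single_mul_eq_ite (hp : p ≠ ⊤)
    {U V : lp (fun _ : I => 𝕜) p →L[𝕜] lp (fun _ : I => 𝕜) p} (hUV : ∀ v, U (V v) = v)
    (i j : I) :
    HasSum (fun k => U (lp.single p k 1) i * V (lp.single p j 1) k) (if i = j then 1 else 0) := by
  have hsum := hasSum_apply_single_mul hp U (V (lp.single p j 1)) i
  rwa [hUV, lp.single_apply, Pi.single_apply] at hsum

end lp

theorem positive_inverse_implies_generalized_permutation_general
    {I : Type*} [DecidableEq I]
    (T S : lp (fun _ : I => ℂ) 1 →L[ℂ] lp (fun _ : I => ℂ) 1)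
    (hTS : ∀ v, T (S v) = v) (hST : ∀ v, S (T v) = v)
    (hT : ∀ i j : I, 0 ≤ ((T (lp.single 1 j 1)) i).re ∧ ((T (lp.single 1 j 1)) i).im = 0)
    (hS : ∀ i j : I, 0 ≤ ((S (lp.single 1 j 1)) i).re ∧ ((S (lp.single 1 j 1)) i).im = 0) :
    ∃ (σ : Equiv.Perm I) (lam : I → ℝ), (∀ i, 0 < lam i) ∧
      ∀ i, T (lp.single 1 i 1) = (lam i : ℂ) • lp.single 1 (σ i) 1 := by
  have hT_nonneg : ∀ i j, 0 ≤ T (lp.single 1 j 1) i :=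
    fun i j => Complex.nonneg_iff.2 ⟨(hT i j).1, (hT i j).2.symm⟩
  have hS_nonneg : ∀ i j, 0 ≤ S (lp.single 1 j 1) i :=
    fun i j => Complex.nonneg_iff.2 ⟨(hS i j).1, (hS i j).2.symm⟩
  obtain ⟨σ, hσ⟩ := exists_perm_ne_zero_iff_of_hasSum_mul_eq_ite hT_nonneg hS_nonneg
    (lp.hasSum_apply_single_mul_eq_ite ENNReal.one_ne_top hTS)
    (lp.hasSum_apply_single_mul_eq_ite ENNReal.one_ne_top hST)
  have hpos : ∀ j, 0 < T (lp.single 1 j 1) (σ j) :=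
    fun j => (hT_nonneg _ j).lt_of_ne' ((hσ _ j).2 rfl)
  refine ⟨σ, fun j => (T (lp.single 1 j 1) (σ j)).re, fun j => (Complex.pos_iff.1 (hpos j)).1,
    fun j => ?_⟩
  have hsupport : ∀ i, i ≠ σ j → T (lp.single 1 j 1) i = 0 := fun i => Not.imp_symm (hσ i j).1
  rw [lp.eq_single_of_apply_eq_zero hsupport, ← Complex.eq_re_of_ofReal_le (hpos j).le, ← lp.single_smul, smul_eq_mul, mul_one]

/-- An invertible bounded operator on `ℓ¹(I)` (`I` countable) whose inverse is also
bounded, such that both operators have nonnegative matrix entries in the standard basis,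
is a generalized permutation: `T (e i) = lam i • e (σ i)` for a permutation `σ` of `I` and
positive reals `lam i`. -/
theorem positive_inverse_implies_generalized_permutation
    {I : Type*} [Countable I] [DecidableEq I] [Fact ((1 : ℝ≥0∞) ≤ 1)]
    (T S : lp (fun _ : I => ℂ) 1 →L[ℂ] lp (fun _ : I => ℂ) 1)
    (hTS : ∀ v, T (S v) = v) (hST : ∀ v, S (T v) = v)
    (hT : ∀ i j : I, 0 ≤ ((T (lp.single 1 j 1)) i).re ∧ ((T (lp.single 1 j 1)) i).im = 0)
    (hS : ∀ i j : I, 0 ≤ ((S (lp.single 1 j 1)) i).re ∧ ((S (lp.single 1 j 1)) i).im = 0) :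
    ∃ (σ : Equiv.Perm I) (lam : I → ℝ), (∀ i, 0 < lam i) ∧
      ∀ i, T (lp.single 1 i 1) = (lam i : ℂ) • lp.single 1 (σ i) 1 :=
  positive_inverse_implies_generalized_permutation_general T S hTS hST hT hS
end

section
/- Let G be a countable commutative group. Then every symmetric multiplicative 2-cocycle f: G × G → ℝ_{>0} is a 2-coboundary: there exists h: G → ℝ_{>0} such that f(g,g') = h(gg')/(h(g)h(g')) for all g, g'. -/
/-!
Taking logarithms turns `f` into a symmetric normalised additive 2-cocycle `c` with values in
`ℝ`. Such a cocycle defines an abelian extension `G × ℝ` of `G` by `ℝ`, with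
`(g, a) + (g', a') = (g g', a + a' + c g g')`. Since `ℝ` is divisible, it is an injective
`ℤ`-module, so the extension splits; a retraction onto `ℝ` exhibits `c` as a coboundary.
-/

section

variable {G A : Type*} [CommGroup G] [AddCommGroup A]

structure IsSymmCocycle (c : G → G → A) : Prop where
  cocycle : ∀ g g' g'', c g g' + c (g * g') g'' = c g (g' * g'') + c g' g''
  symm : ∀ g g', c g g' = c g' g
  one_left : ∀ g, c 1 g = 0

namespace IsSymmCocycle

variable {c : G → G → A}

theorem one_right (hc : IsSymmCocycle c) (g : G) : c g 1 = 0 := by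
  rw [hc.symm, hc.one_left]

abbrev extension (hc : IsSymmCocycle c) : AddCommGroup (G × A) :=
  letI : Zero (G × A) := ⟨(1, 0)⟩
  letI : Add (G × A) := ⟨fun p q => (p.1 * q.1, p.2 + q.2 + c p.1 q.1)⟩
  letI : Neg (G × A) := ⟨fun p => (p.1⁻¹, -p.2 - c p.1 p.1⁻¹)⟩
  { add_assoc := fun p q r => Prod.ext (mul_assoc _ _ _) <| by
      change p.2 + q.2 + c p.1 q.1 + r.2 + c (p.1 * q.1) r.1
        = p.2 + (q.2 + r.2 + c q.1 r.1) + c p.1 (q.1 * r.1)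
      calc _ = p.2 + q.2 + r.2 + (c p.1 q.1 + c (p.1 * q.1) r.1) := by abel
        _ = _ := by rw [hc.cocycle]; abel
    zero_add := fun p => Prod.ext (one_mul _) <| by
      change 0 + p.2 + c 1 p.1 = p.2
      rw [hc.one_left, zero_add, add_zero]
    add_zero := fun p => Prod.ext (mul_one _) <| by
      change p.2 + 0 + c p.1 1 = p.2
      rw [hc.one_right, add_zero, add_zero]
    nsmul := nsmulRec
    zsmul := zsmulRec
    neg_add_cancel := fun p => Prod.ext (inv_mul_cancel _) <| by
      change -p.2 - c p.1 p.1⁻¹ + p.2 + c p.1⁻¹ p.1 = 0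
      rw [hc.symm p.1⁻¹]
      abel
    add_comm := fun p q => Prod.ext (mul_comm _ _) <| by
      change p.2 + q.2 + c p.1 q.1 = q.2 + p.2 + c q.1 p.1
      rw [hc.symm, add_comm p.2] }

theorem exists_eq_coboundary [DivisibleBy A ℤ] (hc : IsSymmCocycle c) :
    ∃ s : G → A, ∀ g g', c g g' = s (g * g') - s g - s g' := by
  let := hc.extension
  have add_def : ∀ p q : G × A, p + q = (p.1 * q.1, p.2 + q.2 + c p.1 q.1) := fun _ _ => rfl
  let i : A →+ G × A :=
    { toFun := fun a => (1, a)
      map_zero' := rfl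
      map_add' := fun a b => by rw [add_def]; simp [hc.one_left] }
  have hi : Function.Injective i := fun a b hab => congrArg Prod.snd hab
  obtain ⟨r, hr⟩ :=
    (Module.Baer.of_divisible A).extension_property_addMonoidHom i hi (AddMonoidHom.id A)
  have hri : ∀ a, r (1, a) = a := DFunLike.congr_fun hr
  refine ⟨fun g => -r (g, 0), fun g g' => ?_⟩
  have hsplit : ((g, 0) + (g', 0) : G × A) = (g * g', 0) + (1, c g g') := by
    simp only [add_def, mul_one, hc.one_right, zero_add, add_zero]
  have hr_split := congrArg r hsplit
  rw [map_add, map_add, hri] at hr_split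
  calc c g g' = r (g, 0) + r (g', 0) - r (g * g', 0) := by rw [hr_split, add_sub_cancel_left]
    _ = -r (g * g', 0) - -r (g, 0) - -r (g', 0) := by abel

end IsSymmCocycle

end

theorem symmetric_two_cocycle_is_coboundary_general
    {G : Type*} [CommGroup G]
    (f : G → G → ℝ) (hpos : ∀ g g', 0 < f g g')
    (hcocycle : ∀ g g' g'', f g g' * f (g * g') g'' = f g (g' * g'') * f g' g'')
    (hsymm : ∀ g g', f g g' = f g' g)
    (hone : ∀ g, f 1 g = 1 ∧ f g 1 = 1) :
    ∃ h : G → ℝ, (∀ g, 0 < h g) ∧ ∀ g g', f g g' = h (g * g') / (h g * h g') := by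
  have hlog : IsSymmCocycle fun g g' => Real.log (f g g') :=
    { cocycle := fun g g' g'' => by
        simp only [← Real.log_mul (hpos _ _).ne' (hpos _ _).ne', hcocycle]
      symm := fun g g' => by rw [hsymm]
      one_left := fun g => by rw [(hone g).1, Real.log_one] }
  obtain ⟨s, hs⟩ := hlog.exists_eq_coboundary
  refine ⟨fun g => Real.exp (s g), fun g => Real.exp_pos _, fun g g' => ?_⟩
  rw [← Real.exp_log (hpos g g'), hs, Real.exp_sub, Real.exp_sub, div_div]

/-- Every symmetric multiplicative 2-cocycle on a countable commutative group with values
in the positive reals is a 2-coboundary. -/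
theorem symmetric_two_cocycle_is_coboundary
    {G : Type*} [CommGroup G] [Countable G]
    (f : G → G → ℝ) (hpos : ∀ g g', 0 < f g g')
    (hcocycle : ∀ g g' g'', f g g' * f (g * g') g'' = f g (g' * g'') * f g' g'')
    (hsymm : ∀ g g', f g g' = f g' g)
    (hone : ∀ g, f 1 g = 1 ∧ f g 1 = 1) :
    ∃ h : G → ℝ, (∀ g, 0 < h g) ∧ ∀ g g', f g g' = h (g * g') / (h g * h g') :=
  symmetric_two_cocycle_is_coboundary_general f hpos hcocycle hsymm hone
end

section
/- Let A be a commutative adjacency algebra on a finite set I of cardinality n (a commutative subalgebra of M_n(ℂ) generated by matrices with nonnegative entries, containing the identity). If some index i_0 ∈ I is maximal (the evaluation map T ↦ T e_{i_0} maps the adjacency cone of A onto the nonnegative orthant ℝ_{≥0}^n), then the evaluation map at e_{i_0} is a linear isomorphism from A to ℂ^n; in particular dim A = n and i_0 is non-degenerate. -/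
/-- Let `𝒜` be a commutative adjacency algebra on a finite set of cardinality `n`
(a commutative unital subalgebra of `M_n(ℂ)` generated by matrices with nonnegative real
entries). If the index `i₀` is maximal (evaluation at `e i₀` maps the adjacency cone of
`𝒜` onto the nonnegative orthant), then evaluation at `e i₀` is a linear isomorphism from
`𝒜` onto `ℂ^n`; in particular `dim 𝒜 = n` and `i₀` is non-degenerate. -/
theorem finite_maximal_implies_nondegenerate
    (n : ℕ) (𝒜 : Subalgebra ℂ (Matrix (Fin n) (Fin n) ℂ))
    (hcomm : ∀ x ∈ 𝒜, ∀ y ∈ 𝒜, x * y = y * x)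
    (hgen : ∃ S : Set (Matrix (Fin n) (Fin n) ℂ),
      (∀ T ∈ S, ∀ i j, 0 ≤ (T i j).re ∧ (T i j).im = 0) ∧
      𝒜 = Algebra.adjoin ℂ S)
    (i₀ : Fin n)
    (hmax : ∀ v : Fin n → ℝ, (∀ i, 0 ≤ v i) →
      ∃ T ∈ 𝒜, (∀ i j, 0 ≤ (T i j).re ∧ (T i j).im = 0) ∧
        T.mulVec (Pi.single i₀ 1) = fun i => (v i : ℂ)) :
    Function.Bijective
      (fun T : 𝒜 => (T : Matrix (Fin n) (Fin n) ℂ).mulVec (Pi.single i₀ 1)) ∧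
    Module.finrank ℂ 𝒜 = n := by
  -- the evaluation map as a linear map
  set f : 𝒜 →ₗ[ℂ] (Fin n → ℂ) :=
    { toFun := fun T => (T : Matrix (Fin n) (Fin n) ℂ).mulVec (Pi.single i₀ 1)
      map_add' := by
        intro x y
        funext i; simp [Matrix.add_mulVec]
      map_smul' := by
        intro c x
        funext i; simp [Matrix.smul_mulVec] } with hf
  have hinj : Function.Injective f := by
    rw [injective_iff_map_eq_zero]
    rintro ⟨T, hT⟩ h0
    have h0' : T.mulVec (Pi.single i₀ 1) = 0 := h0
    have hcol : ∀ j, ∀ i, T i j = 0 := by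
      intro j
      obtain ⟨P, hP, _, hPe⟩ := hmax (Pi.single j 1) (fun i => by
        classical
        rcases eq_or_ne i j with h | h <;> simp [Pi.single_apply, h])
      have hPe' : P.mulVec (Pi.single i₀ 1) = Pi.single j 1 := by
        rw [hPe]; funext i
        classical
        rcases eq_or_ne i j with h | h <;> simp [Pi.single_apply, h]
      have : T.mulVec (Pi.single j 1) = 0 := by
        rw [← hPe', Matrix.mulVec_mulVec, hcomm T hT P hP, ← Matrix.mulVec_mulVec, h0',
          Matrix.mulVec_zero]
      intro i
      have := congrFun this i
      simpa using this
    have : T = 0 := by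
      ext i j; exact hcol j i
    exact Subtype.ext this
  have hsurj : Function.Surjective f := by
    intro w
    obtain ⟨A, hA, -, hAe⟩ := hmax (fun i => max (w i).re 0) (fun i => le_max_right _ _)
    obtain ⟨B, hB, -, hBe⟩ := hmax (fun i => max (-(w i).re) 0) (fun i => le_max_right _ _)
    obtain ⟨C, hC, -, hCe⟩ := hmax (fun i => max (w i).im 0) (fun i => le_max_right _ _)
    obtain ⟨D, hD, -, hDe⟩ := hmax (fun i => max (-(w i).im) 0) (fun i => le_max_right _ _)
    refine ⟨⟨A - B + Complex.I • (C - D), ?_⟩, ?_⟩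
    · exact add_mem (sub_mem hA hB) (Subalgebra.smul_mem _ (sub_mem hC hD) _)
    · funext i
      have : ((A - B + Complex.I • (C - D)).mulVec (Pi.single i₀ 1)) i = w i := by
        rw [Matrix.add_mulVec, Matrix.sub_mulVec, Matrix.smul_mulVec, Matrix.sub_mulVec,
          hAe, hBe, hCe, hDe]
        have hre : (max (w i).re 0 : ℝ) - max (-(w i).re) 0 = (w i).re := by
          rcases le_total 0 (w i).re with h | h
          · rw [max_eq_left h, max_eq_right (neg_nonpos.mpr h)]; ring
          · rw [max_eq_right h, max_eq_left (neg_nonneg.mpr h)]; ring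
        have him : (max (w i).im 0 : ℝ) - max (-(w i).im) 0 = (w i).im := by
          rcases le_total 0 (w i).im with h | h
          · rw [max_eq_left h, max_eq_right (neg_nonpos.mpr h)]; ring
          · rw [max_eq_right h, max_eq_left (neg_nonneg.mpr h)]; ring
        simp only [Pi.add_apply, Pi.sub_apply, Pi.smul_apply, smul_eq_mul]
        rw [← Complex.ofReal_sub, ← Complex.ofReal_sub, hre, him, mul_comm]
        exact Complex.re_add_im (w i)
      exact this
  refine ⟨⟨hinj, hsurj⟩, ?_⟩
  have e := LinearEquiv.ofBijective f ⟨hinj, hsurj⟩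
  have := e.finrank_eq
  simpa using this
end

section
/- Let A be a commutative adjacency algebra on a countable set I and i_0 ∈ I a maximal and non-degenerate element. Then there exists a basis {b_i}_{i∈I} of A contained in the adjacency cone C(A) such that b_i e_{i_0} = e_i for all i, C(A) equals the closed cone generated by the b_i, and the products b_i b_j expand on {b_k} with nonnegative coefficients; in particular A is positively multiplicative. -/
/-!
Non-degeneracy gives `α > 0` with `α ‖T‖ ≤ ‖T e_{i₀}‖` on `𝒜`, so `T ↦ T e_{i₀}` is injective
on `𝒜`, and maximality provides `b i ∈ C(𝒜)` with `b i e_{i₀} = e_i`, all of norm at most `α⁻¹`.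
For `T ∈ 𝒜` the series `∑ (T e_{i₀})_i • b i` converges absolutely because `T e_{i₀} ∈ ℓ¹`; its
sum lies in the closed algebra `𝒜` and agrees with `T` at `e_{i₀}`, so it is `T`. When `T` is an
adjacency operator the coefficients `(T e_{i₀})_i` are nonnegative reals, and conversely
nonnegative combinations of adjacency operators are adjacency operators. Products of adjacency
operators are adjacency operators, which gives the nonnegative expansion of `b i * b j`.
-/

open scoped ENNReal

/-- `T` is an adjacency operator on `ℓ¹(I)`: all its matrix entries in the standard
Schauder basis are nonnegative reals. -/
def IsAdjacencyOp {I : Type*} [DecidableEq I] [Fact ((1 : ℝ≥0∞) ≤ 1)]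
    (T : lp (fun _ : I => ℂ) 1 →L[ℂ] lp (fun _ : I => ℂ) 1) : Prop :=
  ∀ i j : I, 0 ≤ ((T (lp.single 1 j 1)) i).re ∧ ((T (lp.single 1 j 1)) i).im = 0

-- On `ℂ` this order makes `0 ≤ z` mean that `z` is a nonnegative real, the entry condition of
-- `IsAdjacencyOp`.
open scoped ComplexOrder

@[simp]
theorem lp.evalCLM_apply {α 𝕜 : Type*} {E : α → Type*} [∀ i, NormedAddCommGroup (E i)]
    [NormedRing 𝕜] [∀ i, Module 𝕜 (E i)] [∀ i, IsBoundedSMul 𝕜 (E i)] {p : ℝ≥0∞}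
    [Fact (1 ≤ p)] (i : α) (f : lp E p) : lp.evalCLM 𝕜 E p i f = f i :=
  rfl

theorem lp.linearIndependent_single_one {α 𝕜 : Type*} [DecidableEq α] [NormedRing 𝕜]
    (p : ℝ≥0∞) : LinearIndependent 𝕜 fun i : α => (lp.single p i 1 : lp (fun _ : α => 𝕜) p) := by
  refine .of_comp (LinearMap.pi fun j => lp.evalₗ (𝕜 := 𝕜) _ p j) ?_
  have : (LinearMap.pi fun j => lp.evalₗ (𝕜 := 𝕜) _ p j) ∘
      (fun i : α => (lp.single p i 1 : lp (fun _ : α => 𝕜) p)) = fun i => Pi.single i 1 := by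
    ext
    simp [lp.single_apply]
  rw [this]
  exact Pi.linearIndependent_single_one α 𝕜

theorem lp.single_eq_smul_single_one {α 𝕜 : Type*} [DecidableEq α] [NormedRing 𝕜]
    (p : ℝ≥0∞) (i : α) (a : 𝕜) :
    (lp.single p i a : lp (fun _ : α => 𝕜) p) = a • lp.single p i 1 := by
  rw [← lp.single_smul, smul_eq_mul, mul_one]

theorem lp.single_one_nonneg {α 𝕜 : Type*} [DecidableEq α] [NormedRing 𝕜] [PartialOrder 𝕜]
    [ZeroLEOneClass 𝕜] (p : ℝ≥0∞) (i j : α) : 0 ≤ (lp.single p i 1 : lp (fun _ : α => 𝕜) p) j := by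
  rw [lp.single_apply]
  exact (Pi.single_nonneg (α := fun _ : α => 𝕜)).2 zero_le_one j

theorem HasSum.mem_of_isClosed {ι α S : Type*} [AddCommMonoid α] [TopologicalSpace α]
    [SetLike S α] [AddSubmonoidClass S α] {s : S} (hs : IsClosed (s : Set α)) {f : ι → α} {a : α}
    (hf : ∀ i, f i ∈ s) (h : HasSum f a) : a ∈ s :=
  hs.mem_of_tendsto h (.of_forall fun _ => sum_mem fun i _ => hf i)

theorem injOn_apply_of_coercive {𝕜 E F M : Type*} [NontriviallyNormedField 𝕜]
    [NormedAddCommGroup E] [NormedSpace 𝕜 E] [NormedAddCommGroup F] [NormedSpace 𝕜 F]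
    [SetLike M (E →L[𝕜] F)] [AddSubgroupClass M (E →L[𝕜] F)] {s : M} {x : E} {α : ℝ}
    (hα : 0 < α) (hco : ∀ T ∈ s, α * ‖T‖ ≤ ‖T x‖) :
    Set.InjOn (fun T : E →L[𝕜] F => T x) s := by
  intro T hT S hS h
  have hTS := hco (T - S) (sub_mem hT hS)
  rw [sub_apply, sub_eq_zero.2 h, norm_zero, ← mul_zero α] at hTS
  exact sub_eq_zero.1 (norm_le_zero_iff.1 (le_of_mul_le_mul_left hTS hα))

section

variable {I : Type*} [DecidableEq I]

local notation "V" => lp (fun _ : I => ℂ) 1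

theorem isAdjacencyOp_iff {T : V →L[ℂ] V} :
    IsAdjacencyOp T ↔ ∀ i j, 0 ≤ T (lp.single 1 j 1) i :=
  forall₂_congr fun _ _ => by rw [Complex.nonneg_iff, eq_comm]

theorem IsAdjacencyOp.apply_nonneg {T : V →L[ℂ] V} (hT : IsAdjacencyOp T) {v : V}
    (hv : ∀ j, 0 ≤ v j) (i : I) : 0 ≤ T v i := by
  have hsum : HasSum (fun j => v j * T (lp.single 1 j 1) i) (T v i) := by
    have := (lp.evalCLM ℂ _ 1 i).hasSum (T.hasSum (lp.hasSum_single ENNReal.one_ne_top v))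
    simpa [lp.single_eq_smul_single_one 1 _ (v _)] using this
  exact hsum.nonneg fun j => mul_nonneg (hv j) (isAdjacencyOp_iff.1 hT i j)

theorem IsAdjacencyOp.mul {T S : V →L[ℂ] V} (hT : IsAdjacencyOp T) (hS : IsAdjacencyOp S) :
    IsAdjacencyOp (T * S) :=
  isAdjacencyOp_iff.2 fun i j => hT.apply_nonneg (fun k => isAdjacencyOp_iff.1 hS k j) i

theorem IsAdjacencyOp.of_hasSum {ι : Type*} {b : ι → V →L[ℂ] V} (hb : ∀ k, IsAdjacencyOp (b k))
    {c : ι → ℝ} (hc : ∀ k, 0 ≤ c k) {T : V →L[ℂ] V} (h : HasSum (fun k => (c k : ℂ) • b k) T) :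
    IsAdjacencyOp T := by
  refine isAdjacencyOp_iff.2 fun i j => ?_
  have := (lp.evalCLM ℂ _ 1 i).hasSum
    ((ContinuousLinearMap.apply ℂ V (lp.single 1 j 1)).hasSum h)
  exact this.nonneg fun k => by
    simpa using mul_nonneg (Complex.zero_le_real.2 (hc k)) (isAdjacencyOp_iff.1 (hb k) i j)

omit [DecidableEq I] in
theorem summable_smul_of_norm_le {E : Type*} [NormedAddCommGroup E] [NormedSpace ℂ E]
    [CompleteSpace E] (v : V) {b : I → E} {C : ℝ} (hb : ∀ i, ‖b i‖ ≤ C) :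
    Summable fun i => v i • b i := by
  have hv : Summable fun i => ‖v i‖ := by simpa using (lp.memℓp v).summable (by simp)
  refine .of_norm_bounded (hv.mul_right C) fun i => ?_
  rw [norm_smul]
  exact mul_le_mul_of_nonneg_left (hb i) (norm_nonneg _)

theorem apply_eq_of_hasSum_smul {b : I → V →L[ℂ] V} {x : V} (hb : ∀ i, b i x = lp.single 1 i 1)
    {v : V} {S : V →L[ℂ] V} (h : HasSum (fun i => v i • b i) S) : S x = v := by
  refine ((ContinuousLinearMap.apply ℂ V x).hasSum h).unique ?_
  simpa [hb, lp.single_eq_smul_single_one 1 _ (v _)] using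
    lp.hasSum_single ENNReal.one_ne_top v

variable {M : Type*} [SetLike M (lp (fun _ : I => ℂ) 1 →L[ℂ] lp (fun _ : I => ℂ) 1)]
  [AddSubmonoidClass M (lp (fun _ : I => ℂ) 1 →L[ℂ] lp (fun _ : I => ℂ) 1)]
  [SMulMemClass M ℂ (lp (fun _ : I => ℂ) 1 →L[ℂ] lp (fun _ : I => ℂ) 1)] {s : M}

theorem hasSum_apply_smul_of_injOn (hclosed : IsClosed (s : Set (V →L[ℂ] V))) {x : V}
    (hinj : Set.InjOn (fun T : V →L[ℂ] V => T x) s) {b : I → V →L[ℂ] V} (hbs : ∀ i, b i ∈ s)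
    (hb : ∀ i, b i x = lp.single 1 i 1) {C : ℝ} (hC : ∀ i, ‖b i‖ ≤ C) {T : V →L[ℂ] V}
    (hT : T ∈ s) : HasSum (fun i => T x i • b i) T := by
  obtain ⟨S, hS⟩ := summable_smul_of_norm_le (T x) hC
  have hSs : S ∈ s := hS.mem_of_isClosed hclosed fun i => SMulMemClass.smul_mem _ (hbs i)
  obtain rfl : S = T := hinj hSs hT (apply_eq_of_hasSum_smul hb hS)
  exact hS

theorem mem_and_isAdjacencyOp_iff_hasSum (hclosed : IsClosed (s : Set (V →L[ℂ] V)))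
    {b : I → V →L[ℂ] V} (hbs : ∀ i, b i ∈ s) (hbadj : ∀ i, IsAdjacencyOp (b i)) {x : V}
    (hx : ∀ j, 0 ≤ x j) (hexp : ∀ T ∈ s, HasSum (fun i => T x i • b i) T) (T : V →L[ℂ] V) :
    T ∈ s ∧ IsAdjacencyOp T ↔
      ∃ c : I → ℝ, (∀ i, 0 ≤ c i) ∧ HasSum (fun i => (c i : ℂ) • b i) T := by
  constructor
  · rintro ⟨hTs, hT⟩
    have hTx (i : I) : 0 ≤ T x i := hT.apply_nonneg hx i
    have hre (i : I) : ((T x i).re : ℂ) = T x i :=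
      (Complex.eq_re_of_ofReal_le (r := 0) (by simpa using hTx i)).symm
    refine ⟨fun i => (T x i).re, fun i => (Complex.nonneg_iff.1 (hTx i)).1, ?_⟩
    simpa only [hre] using hexp T hTs
  · rintro ⟨c, hc, hT⟩
    exact ⟨hT.mem_of_isClosed hclosed fun i => SMulMemClass.smul_mem _ (hbs i),
      .of_hasSum hbadj hc hT⟩

end

theorem maximal_nondegenerate_gives_pm_basis_general
    {I : Type*} [DecidableEq I] [Fact ((1 : ℝ≥0∞) ≤ 1)]
    (𝒜 : Subalgebra ℂ (lp (fun _ : I => ℂ) 1 →L[ℂ] lp (fun _ : I => ℂ) 1))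
    (hclosed : IsClosed (𝒜 : Set (lp (fun _ : I => ℂ) 1 →L[ℂ] lp (fun _ : I => ℂ) 1)))
    (i₀ : I)
    (hnd : ∃ α : ℝ, 0 < α ∧ ∀ T ∈ 𝒜, α * ‖T‖ ≤ ‖T (lp.single 1 i₀ 1)‖)
    (hmax : ∀ v : lp (fun _ : I => ℂ) 1, (∀ i, 0 ≤ (v i).re ∧ (v i).im = 0) →
      ∃ T ∈ 𝒜, IsAdjacencyOp T ∧ T (lp.single 1 i₀ 1) = v) :
    ∃ b : I → (lp (fun _ : I => ℂ) 1 →L[ℂ] lp (fun _ : I => ℂ) 1),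
      (∀ i, b i ∈ 𝒜 ∧ IsAdjacencyOp (b i)) ∧
      (∀ i, b i (lp.single 1 i₀ 1) = lp.single 1 i 1) ∧
      LinearIndependent ℂ b ∧
      (∀ T, (T ∈ 𝒜 ∧ IsAdjacencyOp T) ↔
        ∃ c : I → ℝ, (∀ i, 0 ≤ c i) ∧ HasSum (fun i => (c i : ℂ) • b i) T) ∧
      (∀ i j, ∃ c : I → ℝ, (∀ k, 0 ≤ c k) ∧
        HasSum (fun k => (c k : ℂ) • b k) (b i * b j)) := by
  obtain ⟨α, hα, hco⟩ := hnd
  choose b hb𝒜 hbadj hbe using fun i => hmax (lp.single 1 i 1) fun j =>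
    (Complex.nonneg_iff.1 (lp.single_one_nonneg 1 i j)).imp_right Eq.symm
  have hbnorm (i : I) : ‖b i‖ ≤ α⁻¹ := by
    have := hco (b i) (hb𝒜 i)
    rw [hbe, lp.norm_single (by norm_num), norm_one] at this
    rwa [← one_div, le_div_iff₀' hα]
  have hexp (T) (hT : T ∈ 𝒜) :=
    hasSum_apply_smul_of_injOn hclosed (injOn_apply_of_coercive hα hco) hb𝒜 hbe hbnorm hT
  have hcone := mem_and_isAdjacencyOp_iff_hasSum hclosed hb𝒜 hbadj
    (lp.single_one_nonneg 1 i₀) hexp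
  refine ⟨b, fun i => ⟨hb𝒜 i, hbadj i⟩, hbe, ?_, hcone, fun i j =>
    (hcone _).1 ⟨mul_mem (hb𝒜 i) (hb𝒜 j), (hbadj i).mul (hbadj j)⟩⟩
  refine .of_comp (ContinuousLinearMap.apply ℂ _ (lp.single 1 i₀ 1)).toLinearMap ?_
  simpa [Function.comp_def, hbe] using lp.linearIndependent_single_one (𝕜 := ℂ) (α := I) 1

/-- Let `𝒜` be a (closed, commutative, generated by adjacency operators) adjacency algebra
on a countable set `I` and `i₀ ∈ I` maximal and non-degenerate. Then there is a family
`{b i} ⊆ C(𝒜)` with `b i (e i₀) = e i`, linearly independent, such that the adjacency cone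
`C(𝒜) = {T ∈ 𝒜 ∣ T adjacency}` consists exactly of the convergent sums `∑ c i • b i` with
`c i ≥ 0`, and the products `b i * b j` expand on `{b k}` with nonnegative coefficients;
in particular `𝒜` is positively multiplicative. -/
theorem maximal_nondegenerate_gives_pm_basis
    {I : Type*} [Countable I] [DecidableEq I] [Fact ((1 : ℝ≥0∞) ≤ 1)]
    (𝒜 : Subalgebra ℂ (lp (fun _ : I => ℂ) 1 →L[ℂ] lp (fun _ : I => ℂ) 1))
    (hclosed : IsClosed (𝒜 : Set (lp (fun _ : I => ℂ) 1 →L[ℂ] lp (fun _ : I => ℂ) 1)))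
    (hcomm : ∀ x ∈ 𝒜, ∀ y ∈ 𝒜, x * y = y * x)
    (hgen : ∃ S : Set (lp (fun _ : I => ℂ) 1 →L[ℂ] lp (fun _ : I => ℂ) 1),
      (∀ T ∈ S, IsAdjacencyOp T) ∧
      (𝒜 : Set (lp (fun _ : I => ℂ) 1 →L[ℂ] lp (fun _ : I => ℂ) 1)) =
        closure (Algebra.adjoin ℂ S : Set (lp (fun _ : I => ℂ) 1 →L[ℂ] lp (fun _ : I => ℂ) 1)))
    (i₀ : I)
    (hnd : ∃ α : ℝ, 0 < α ∧ ∀ T ∈ 𝒜, α * ‖T‖ ≤ ‖T (lp.single 1 i₀ 1)‖)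
    (hmax : ∀ v : lp (fun _ : I => ℂ) 1, (∀ i, 0 ≤ (v i).re ∧ (v i).im = 0) →
      ∃ T ∈ 𝒜, IsAdjacencyOp T ∧ T (lp.single 1 i₀ 1) = v) :
    ∃ b : I → (lp (fun _ : I => ℂ) 1 →L[ℂ] lp (fun _ : I => ℂ) 1),
      (∀ i, b i ∈ 𝒜 ∧ IsAdjacencyOp (b i)) ∧
      (∀ i, b i (lp.single 1 i₀ 1) = lp.single 1 i 1) ∧
      LinearIndependent ℂ b ∧
      (∀ T, (T ∈ 𝒜 ∧ IsAdjacencyOp T) ↔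
        ∃ c : I → ℝ, (∀ i, 0 ≤ c i) ∧ HasSum (fun i => (c i : ℂ) • b i) T) ∧
      (∀ i j, ∃ c : I → ℝ, (∀ k, 0 ≤ c k) ∧
        HasSum (fun k => (c k : ℂ) • b k) (b i * b j)) :=
  maximal_nondegenerate_gives_pm_basis_general 𝒜 hclosed i₀ hnd hmax
end
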